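/- Let (Ω, 𝔽, P) be a probability space, g : Ω → ℝ^d a random vector with each g(i) and g(i)² integrable, w, w* ∈ ℝ^d fixed, and E[g(i)²] > 0 for each i. Define α(i) = E[g(i)·(w(i) − w*(i))] / E[g(i)²] and let D = Diag(α). Then E‖(w − D·g) − w*‖² = E‖w − w*‖² − Σ_{i=1}^d α(i)²·E[g(i)²]. In particular the expected squared distance strictly decreases whenever some α(i) ≠ 0, regardless of the signs of the entries α(i). -/

import Mathlib

open Matrix MeasureTheory

/-- The Euclidean norm of a vector in `ℝ^d`. -/
noncomputable def euclidNorm {d : ℕ} (v : Fin d → ℝ) : ℝ :=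
  ‖(EuclideanSpace.equiv (Fin d) ℝ).symm v‖

/-!
Coordinatewise, the ideal step `α i` makes the residual `e i - α i * g i` (with `e = w - w*`)
orthogonal to `g i` in `L²`, that is `α i * E[g i ²] = e i * E[g i]`. Pythagoras then gives
`E[(e i - α i * g i)²] = e i ² - α i ² * E[g i ²]`, whatever the sign of `α i`, and summing over
the coordinates yields the identity.
-/

lemma euclidNorm_sq {d : ℕ} (v : Fin d → ℝ) : euclidNorm v ^ 2 = ∑ i, v i ^ 2 := by
  rw [euclidNorm, EuclideanSpace.norm_eq, Real.sq_sqrt (by positivity)]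
  simp [sq_abs]

lemma sub_diagonal_mulVec_sub_apply {d : ℕ} (w wstar α x : Fin d → ℝ) (i : Fin d) :
    (w - diagonal α *ᵥ x - wstar) i = (w i - wstar i) - α i * x i := by
  simp only [Pi.sub_apply, mulVec_diagonal]
  ring

lemma const_sub_mul_sq_eq (c a x : ℝ) :
    (c - a * x) ^ 2 = c ^ 2 + (-(2 * a * c)) * x + a ^ 2 * x ^ 2 := by
  ring

section Residual

variable {Ω : Type*} [MeasurableSpace Ω] {P : Measure Ω} {X : Ω → ℝ}

lemma orthogonal_of_eq_div {c a : ℝ} (hX2 : ∫ ω, X ω ^ 2 ∂P ≠ 0)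
    (ha : a = (∫ ω, X ω * c ∂P) / ∫ ω, X ω ^ 2 ∂P) :
    a * ∫ ω, X ω ^ 2 ∂P = c * ∫ ω, X ω ∂P := by
  rw [ha, div_mul_cancel₀ _ hX2, integral_mul_const, mul_comm]

variable [IsProbabilityMeasure P]

lemma integrable_const_sub_mul_sq (hX : Integrable X P) (hX2 : Integrable (fun ω => X ω ^ 2) P)
    (c a : ℝ) : Integrable (fun ω => (c - a * X ω) ^ 2) P := by
  simp_rw [const_sub_mul_sq_eq]
  exact ((integrable_const _).add (hX.const_mul _)).add (hX2.const_mul _)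

lemma integral_const_sub_mul_sq (hX : Integrable X P) (hX2 : Integrable (fun ω => X ω ^ 2) P)
    (c a : ℝ) :
    ∫ ω, (c - a * X ω) ^ 2 ∂P = c ^ 2 - 2 * a * c * ∫ ω, X ω ∂P + a ^ 2 * ∫ ω, X ω ^ 2 ∂P := by
  have hlin : Integrable (fun ω => c ^ 2 + (-(2 * a * c)) * X ω) P :=
    (integrable_const _).add (hX.const_mul _)
  simp_rw [const_sub_mul_sq_eq]
  rw [integral_add hlin (hX2.const_mul _),
    integral_add (integrable_const _) (hX.const_mul _), integral_const, integral_const_mul,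
    integral_const_mul, probReal_univ, one_smul]
  ring

lemma integral_const_sub_mul_sq_of_orthogonal (hX : Integrable X P)
    (hX2 : Integrable (fun ω => X ω ^ 2) P) {c a : ℝ}
    (horth : a * ∫ ω, X ω ^ 2 ∂P = c * ∫ ω, X ω ∂P) :
    ∫ ω, (c - a * X ω) ^ 2 ∂P = c ^ 2 - a ^ 2 * ∫ ω, X ω ^ 2 ∂P := by
  rw [integral_const_sub_mul_sq hX hX2]
  linear_combination 2 * a * horth

end Residual

/-- With the ideal component step-sizes `α(i) = E[g(i)·(w(i) - w*(i))]/E[g(i)²]` and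
`D = Diag(α)`, one has `E‖(w - D·g) - w*‖² = E‖w - w*‖² - Σᵢ α(i)²·E[g(i)²]`; in particular
the expected squared distance strictly decreases whenever some `α(i) ≠ 0`, regardless of the
signs of the entries `α(i)`. -/
theorem stmt_6 {d : ℕ} {Ω : Type*} [MeasurableSpace Ω] (P : Measure Ω)
    [IsProbabilityMeasure P] (g : Ω → Fin d → ℝ)
    (hint1 : ∀ i, Integrable (fun ω => g ω i) P)
    (hint2 : ∀ i, Integrable (fun ω => (g ω i) ^ 2) P)
    (w wstar : Fin d → ℝ)
    (hpos : ∀ i, 0 < ∫ ω, (g ω i) ^ 2 ∂P)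
    (α : Fin d → ℝ)
    (hα : ∀ i, α i = (∫ ω, g ω i * (w i - wstar i) ∂P) / ∫ ω, (g ω i) ^ 2 ∂P) :
    (∫ ω, euclidNorm ((w - (Matrix.diagonal α).mulVec (g ω)) - wstar) ^ 2 ∂P)
        = (∫ (_ : Ω), euclidNorm (w - wstar) ^ 2 ∂P)
          - ∑ i, (α i) ^ 2 * ∫ ω, (g ω i) ^ 2 ∂P
      ∧ ((∃ i, α i ≠ 0) →
          (∫ ω, euclidNorm ((w - (Matrix.diagonal α).mulVec (g ω)) - wstar) ^ 2 ∂P)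
            < (∫ (_ : Ω), euclidNorm (w - wstar) ^ 2 ∂P)) := by
  have hidentity : (∫ ω, euclidNorm ((w - (Matrix.diagonal α).mulVec (g ω)) - wstar) ^ 2 ∂P)
      = (∫ (_ : Ω), euclidNorm (w - wstar) ^ 2 ∂P) - ∑ i, (α i) ^ 2 * ∫ ω, (g ω i) ^ 2 ∂P := by
    simp only [euclidNorm_sq, sub_diagonal_mulVec_sub_apply]
    simp only [Pi.sub_apply, integral_const, probReal_univ, one_smul]
    rw [integral_finsetSum _ fun i _ => integrable_const_sub_mul_sq (hint1 i) (hint2 i) _ _,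
      ← Finset.sum_sub_distrib]
    exact Finset.sum_congr rfl fun i _ => integral_const_sub_mul_sq_of_orthogonal (hint1 i)
      (hint2 i) (orthogonal_of_eq_div (hpos i).ne' (hα i))
  refine ⟨hidentity, fun ⟨i, hi⟩ => ?_⟩
  have hdecrease : 0 < ∑ i, (α i) ^ 2 * ∫ ω, (g ω i) ^ 2 ∂P :=
    Finset.sum_pos' (fun j _ => mul_nonneg (sq_nonneg _) (hpos j).le)
      ⟨i, Finset.mem_univ i, mul_pos (by positivity) (hpos i)⟩
  linarith
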